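/- arXiv:2007.00796 — 4 statements merged into one kernel-verified Lean document; each statement's English description precedes it below -/
import Mathlib

section
/- The tri-diagonal block precision matrix κ of a Gaussian chain is positive definite: for blocks κ_{ii} = Σᵢ + W_{i+1}ᵀΣ_{i+1}W_{i+1} for 0 ≤ i ≤ d-1, κ_{dd} = Σ_d, κ_{i,i+1} = -(Σ_{i+1}W_{i+1})ᵀ, κ_{i+1,i} = -(Σ_{i+1}W_{i+1}), and all other blocks zero, the quadratic form equals Σ_{i} appropriate sums of squares and vanishes only at zero. -/
/-!
Writing `uᵢ` for the `i`-th block of `x`, completing the square in each pair of consecutive blocks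
turns the quadratic form of `κ` into the exponent of the Gaussian chain
`u₀ ~ N(0, Σ₀⁻¹)`, `u_{k+1} ∣ u_k ~ N(W_k u_k, Σ_{k+1}⁻¹)`:
`xᵀ κ x = u₀ᵀ Σ₀ u₀ + ∑ₖ (u_{k+1} - W_k u_k)ᵀ Σ_{k+1} (u_{k+1} - W_k u_k)`.
Every term is nonnegative, and if all vanish then `u₀ = 0` and `u_{k+1} = W_k u_k`, so `x = 0`.
-/

open Matrix

namespace Matrix

variable {R ι : Type*} {m o : ι → Type*}

def sigmaBlock (κ : Matrix (Σ i, m i) (Σ j, o j) R) (i j : ι) : Matrix (m i) (o j) R :=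
  fun a b => κ ⟨i, a⟩ ⟨j, b⟩

theorem dotProduct_mulVec_sigma [NonUnitalNonAssocSemiring R] [Fintype ι] [∀ i, Fintype (m i)]
    [∀ j, Fintype (o j)] (κ : Matrix (Σ i, m i) (Σ j, o j) R) (x : (Σ i, m i) → R)
    (y : (Σ j, o j) → R) :
    x ⬝ᵥ (κ *ᵥ y) = ∑ i, ∑ j, (fun a => x ⟨i, a⟩) ⬝ᵥ (κ.sigmaBlock i j *ᵥ fun b => y ⟨j, b⟩) := by
  simp only [dotProduct, mulVec, Fintype.sum_sigma, Finset.mul_sum, sigmaBlock]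
  exact Finset.sum_congr rfl fun i _ => Finset.sum_comm

theorem dotProduct_mulVec_sub_mulVec {m p : Type*} [CommRing R] [Fintype m] [Fintype p]
    {A : Matrix m m R} (hA : A.IsSymm) (B : Matrix m p R) (a : p → R) (b : m → R) :
    (b - B *ᵥ a) ⬝ᵥ (A *ᵥ (b - B *ᵥ a)) = b ⬝ᵥ (A *ᵥ b) + a ⬝ᵥ ((Bᵀ * A * B) *ᵥ a) +
      a ⬝ᵥ ((-(A * B))ᵀ *ᵥ b) + b ⬝ᵥ ((-(A * B)) *ᵥ a) := by
  have hB : ∀ c, a ⬝ᵥ (Bᵀ *ᵥ c) = (B *ᵥ a) ⬝ᵥ c := fun c => by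
    rw [dotProduct_mulVec, vecMul_transpose]
  have hswap : (B *ᵥ a) ⬝ᵥ (A *ᵥ b) = b ⬝ᵥ (A *ᵥ (B *ᵥ a)) := by
    rw [dotProduct_mulVec, ← mulVec_transpose, hA.eq, dotProduct_comm]
  simp only [transpose_neg, transpose_mul, hA.eq, neg_mulVec, dotProduct_neg, ← mulVec_mulVec,
    hB, hswap, mulVec_sub, sub_dotProduct, dotProduct_sub]
  ring

end Matrix

theorem Fin.tridiagonal_cases {d : ℕ} (i j : Fin (d + 1)) :
    i = j ∨ (∃ k : Fin d, i = k.castSucc ∧ j = k.succ) ∨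
      (∃ k : Fin d, i = k.succ ∧ j = k.castSucc) ∨ ((i : ℕ) ≠ j ∧ (j : ℕ) ≠ i + 1 ∧ (i : ℕ) ≠ j + 1) := by
  by_cases hij : (j : ℕ) = i + 1
  · exact .inr <| .inl ⟨⟨i, by omega⟩, Fin.ext rfl, Fin.ext hij⟩
  by_cases hji : (i : ℕ) = j + 1
  · exact .inr <| .inr <| .inl ⟨⟨j, by omega⟩, Fin.ext hji, Fin.ext rfl⟩
  by_cases h : i = j
  · exact .inl h
  · exact .inr <| .inr <| .inr ⟨Fin.val_ne_iff.2 h, hij, hji⟩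

theorem Fin.sum_sum_of_tridiagonal {M : Type*} [AddCommMonoid M] :
    ∀ {d : ℕ} (T : Fin (d + 1) → Fin (d + 1) → M),
      (∀ i j : Fin (d + 1), (i : ℕ) ≠ j → (j : ℕ) ≠ i + 1 → (i : ℕ) ≠ j + 1 → T i j = 0) →
      ∑ i, ∑ j, T i j = ∑ i, T i i + ∑ k : Fin d, (T k.castSucc k.succ + T k.succ k.castSucc)
  | 0, T, _ => by simp
  | d + 1, T, hT => by
    have hcol :
        ∑ i : Fin (d + 1), T i.castSucc (Fin.last _) = T (Fin.last d).castSucc (Fin.last _) :=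
      Finset.sum_eq_single _ (fun i _ hi => by
        have := Fin.val_ne_iff.2 hi
        apply hT <;> simp_all <;> omega) (by simp)
    have hrow :
        ∑ j : Fin (d + 1), T (Fin.last _) j.castSucc = T (Fin.last _) (Fin.last d).castSucc :=
      Finset.sum_eq_single _ (fun j _ hj => by
        have := Fin.val_ne_iff.2 hj
        apply hT <;> simp_all <;> omega) (by simp)
    have ih := Fin.sum_sum_of_tridiagonal (fun i j : Fin (d + 1) => T i.castSucc j.castSucc)
      fun i j h₁ h₂ h₃ => hT _ _ h₁ h₂ h₃
    rw [Fin.sum_univ_castSucc (fun k : Fin (d + 1) => T k.castSucc k.succ + T k.succ k.castSucc)]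
    simp only [Fin.sum_univ_castSucc (n := d + 1), Finset.sum_add_distrib, hcol, hrow, ih,
      Fin.succ_castSucc, Fin.succ_last]
    abel

def chainQuadForm {R : Type*} [CommRing R] {d : ℕ} {n : ℕ → ℕ}
    (S : (i : ℕ) → Matrix (Fin (n i)) (Fin (n i)) R)
    (W : (i : ℕ) → Matrix (Fin (n (i + 1))) (Fin (n i)) R) (u : (i : Fin (d + 1)) → Fin (n i) → R) :
    R :=
  -- `n ↑k.succ` and `n (↑k + 1)` agree only up to unfolding, hence the ascription.
  u 0 ⬝ᵥ (S 0 *ᵥ u 0) + ∑ k : Fin d,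
    (u k.succ - (W k *ᵥ u k.castSucc : Fin (n k.succ) → R)) ⬝ᵥ
      (S (k + 1) *ᵥ (u k.succ - (W k *ᵥ u k.castSucc : Fin (n k.succ) → R)))

theorem chainQuadForm_pos {d : ℕ} {n : ℕ → ℕ} {S : (i : ℕ) → Matrix (Fin (n i)) (Fin (n i)) ℝ}
    {W : (i : ℕ) → Matrix (Fin (n (i + 1))) (Fin (n i)) ℝ} (hS : ∀ i ≤ d, (S i).PosDef)
    {u : (i : Fin (d + 1)) → Fin (n i) → ℝ} (hu : u ≠ 0) : 0 < chainQuadForm S W u := by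
  have hnonneg : ∀ i ≤ d, ∀ v, 0 ≤ v ⬝ᵥ (S i *ᵥ v) := fun i hi v => by
    simpa using (hS i hi).posSemidef.dotProduct_mulVec_nonneg v
  have hdef : ∀ i ≤ d, ∀ v, v ⬝ᵥ (S i *ᵥ v) = 0 → v = 0 := fun i hi v hv => by
    by_contra hne
    simpa [hv] using (hS i hi).dotProduct_mulVec_pos hne
  have hsum_nonneg := Finset.sum_nonneg (s := .univ) fun (k : Fin d) _ => hnonneg _ k.succ.is_le
    (u k.succ - (W k *ᵥ u k.castSucc : Fin (n k.succ) → ℝ))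
  refine lt_of_le_of_ne (add_nonneg (hnonneg 0 d.zero_le _) hsum_nonneg) fun h => hu ?_
  obtain ⟨h₀, hsum⟩ := (add_eq_zero_iff_of_nonneg (hnonneg 0 d.zero_le _) hsum_nonneg).1 h.symm
  have hstep := (Finset.sum_eq_zero_iff_of_nonneg fun k _ => hnonneg _ k.succ.is_le _).1 hsum
  funext i
  induction i using Fin.induction with
  | zero => exact hdef 0 d.zero_le _ h₀
  | succ k ih =>
    have := hdef _ k.succ.is_le _ (hstep k (Finset.mem_univ k))
    rwa [ih, Pi.zero_apply, mulVec_zero, sub_zero] at this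

structure IsTriDiagonalBlockPrecision {R : Type*} [Ring R] {d : ℕ} {n : ℕ → ℕ}
    (S : (i : ℕ) → Matrix (Fin (n i)) (Fin (n i)) R)
    (W : (i : ℕ) → Matrix (Fin (n (i + 1))) (Fin (n i)) R)
    (κ : Matrix ((i : Fin (d + 1)) × Fin (n i)) ((i : Fin (d + 1)) × Fin (n i)) R) : Prop where
  diag : ∀ k : Fin d, κ.sigmaBlock k.castSucc k.castSucc = S k + (W k)ᵀ * S (k + 1) * W k
  last : κ.sigmaBlock (Fin.last d) (Fin.last d) = S d
  upper : ∀ k : Fin d, κ.sigmaBlock k.castSucc k.succ = (-(S (k + 1) * W k))ᵀ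
  lower : ∀ k : Fin d, κ.sigmaBlock k.succ k.castSucc = -(S (k + 1) * W k)
  zero : ∀ i j : Fin (d + 1), (i : ℕ) ≠ j → (j : ℕ) ≠ i + 1 → (i : ℕ) ≠ j + 1 →
    κ.sigmaBlock i j = 0

namespace IsTriDiagonalBlockPrecision

variable {R : Type*} {d : ℕ} {n : ℕ → ℕ} {S : (i : ℕ) → Matrix (Fin (n i)) (Fin (n i)) R}
  {W : (i : ℕ) → Matrix (Fin (n (i + 1))) (Fin (n i)) R}
  {κ : Matrix ((i : Fin (d + 1)) × Fin (n i)) ((i : Fin (d + 1)) × Fin (n i)) R}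

theorem sigmaBlock_transpose [CommRing R] (hκ : IsTriDiagonalBlockPrecision S W κ)
    (hS : ∀ i ≤ d, (S i).IsSymm) (i j : Fin (d + 1)) :
    (κ.sigmaBlock i j)ᵀ = κ.sigmaBlock j i := by
  rcases Fin.tridiagonal_cases i j with rfl | ⟨k, rfl, rfl⟩ | ⟨k, rfl, rfl⟩ | ⟨h₁, h₂, h₃⟩
  · rcases Fin.eq_castSucc_or_eq_last i with ⟨k, rfl⟩ | rfl
    · rw [hκ.diag k, transpose_add, transpose_mul, transpose_mul, transpose_transpose,
        (hS k k.castSucc.is_le).eq, (hS (k + 1) k.succ.is_le).eq, Matrix.mul_assoc]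
    · rw [hκ.last, (hS d le_rfl).eq]
  · rw [hκ.upper, hκ.lower, transpose_transpose]
  · rw [hκ.upper, hκ.lower]
  · rw [hκ.zero i j h₁ h₂ h₃, hκ.zero j i (Ne.symm h₁) h₃ h₂, transpose_zero]

theorem isSymm [CommRing R] (hκ : IsTriDiagonalBlockPrecision S W κ)
    (hS : ∀ i ≤ d, (S i).IsSymm) : κ.IsSymm :=
  IsSymm.ext fun ⟨i, a⟩ ⟨j, b⟩ => congrFun (congrFun (hκ.sigmaBlock_transpose hS j i) a) b

theorem dotProduct_mulVec_self [CommRing R] (hκ : IsTriDiagonalBlockPrecision S W κ)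
    (hS : ∀ k : Fin d, (S (k + 1)).IsSymm) (x : ((i : Fin (d + 1)) × Fin (n i)) → R) :
    x ⬝ᵥ (κ *ᵥ x) = chainQuadForm S W fun i a => x ⟨i, a⟩ := by
  set q : Fin (d + 1) → R := fun i => (fun a => x ⟨i, a⟩) ⬝ᵥ (S i *ᵥ fun a => x ⟨i, a⟩)
  have hshift := (Fin.sum_univ_castSucc q).symm.trans (Fin.sum_univ_succ q)
  rw [dotProduct_mulVec_sigma, Fin.sum_sum_of_tridiagonal _ fun i j h₁ h₂ h₃ => by
    rw [hκ.zero i j h₁ h₂ h₃, zero_mulVec, dotProduct_zero], Fin.sum_univ_castSucc]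
  simp only [hκ.diag, hκ.last, hκ.upper, hκ.lower, chainQuadForm,
    dotProduct_mulVec_sub_mulVec (hS _), add_mulVec, dotProduct_add, Finset.sum_add_distrib]
  -- The index types of the blocks of `x` match only up to unfolding, which `ring1!` sees through.
  linear_combination (norm := ring1!) hshift

end IsTriDiagonalBlockPrecision

/-- The tri-diagonal block precision matrix `κ` of a Gaussian chain is positive definite:
with diagonal blocks `κ_{ii} = Σᵢ + W_{i+1}ᵀ Σ_{i+1} W_{i+1}` for `i < d`, `κ_{dd} = Σ_d`,
off-diagonal blocks `κ_{i,i+1} = -(Σ_{i+1} W_{i+1})ᵀ`, `κ_{i+1,i} = -(Σ_{i+1} W_{i+1})`,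
and all other blocks zero, where each `Σᵢ` is positive definite. -/
theorem triDiagonalBlockPrecision_posDef
    (d : ℕ) (n : ℕ → ℕ)
    (S : (i : ℕ) → Matrix (Fin (n i)) (Fin (n i)) ℝ)
    (W : (i : ℕ) → Matrix (Fin (n (i + 1))) (Fin (n i)) ℝ)
    (hS : ∀ i, i ≤ d → (S i).PosDef)
    (κ : Matrix ((i : Fin (d + 1)) × Fin (n i)) ((i : Fin (d + 1)) × Fin (n i)) ℝ)
    (hdiag : ∀ (i : Fin (d + 1)), (i : ℕ) < d → ∀ (a b : Fin (n i)),
      κ ⟨i, a⟩ ⟨i, b⟩ = (S i + (W i)ᵀ * S ((i : ℕ) + 1) * W i) a b)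
    (hlast : ∀ (i : Fin (d + 1)) (hi : (i : ℕ) = d), ∀ (a b : Fin (n i)),
      κ ⟨i, a⟩ ⟨i, b⟩ =
        S d (Fin.cast (congrArg n hi) a) (Fin.cast (congrArg n hi) b))
    (hsupper : ∀ (i j : Fin (d + 1)) (hij : (j : ℕ) = (i : ℕ) + 1),
      ∀ (a : Fin (n i)) (b : Fin (n j)),
      κ ⟨i, a⟩ ⟨j, b⟩ = (-(S ((i : ℕ) + 1) * W i))ᵀ a (Fin.cast (congrArg n hij) b))
    (hslower : ∀ (i j : Fin (d + 1)) (hij : (j : ℕ) = (i : ℕ) + 1),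
      ∀ (a : Fin (n i)) (b : Fin (n j)),
      κ ⟨j, b⟩ ⟨i, a⟩ = (-(S ((i : ℕ) + 1) * W i)) (Fin.cast (congrArg n hij) b) a)
    (hzero : ∀ (i j : Fin (d + 1)), (i : ℕ) ≠ (j : ℕ) → (j : ℕ) ≠ (i : ℕ) + 1 →
      (i : ℕ) ≠ (j : ℕ) + 1 → ∀ (a : Fin (n i)) (b : Fin (n j)), κ ⟨i, a⟩ ⟨j, b⟩ = 0) :
    κ.PosDef := by
  have hκ : IsTriDiagonalBlockPrecision S W κ :=
    { diag := fun k => Matrix.ext (hdiag _ k.isLt)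
      last := Matrix.ext (hlast _ rfl)
      upper := fun k => Matrix.ext (hsupper _ _ rfl)
      lower := fun k => Matrix.ext fun b a => hslower _ _ rfl a b
      zero := fun i j h₁ h₂ h₃ => Matrix.ext (hzero i j h₁ h₂ h₃) }
  have hSymm : ∀ i ≤ d, (S i).IsSymm := fun i hi => isHermitian_iff_isSymm.1 (hS i hi).isHermitian
  refine .of_dotProduct_mulVec_pos (isHermitian_iff_isSymm.2 (hκ.isSymm hSymm)) fun x hx => ?_
  rw [star_trivial, hκ.dotProduct_mulVec_self fun k => hSymm _ k.succ.is_le]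
  exact chainQuadForm_pos hS fun hu => hx (funext fun ⟨i, a⟩ => congrFun (congrFun hu i) a)
end

section
/- If M₁ := W₁(I + W₁ᵀW₁)⁻¹W₁ᵀ and M₂ := W₂(I + W₂ᵀW₂ - M₁)⁻¹W₂ᵀ, then M₂ is positive semi-definite and all of its eigenvalues are strictly less than 1. -/
open Matrix

/-- Key lemma: if `C` is positive definite then `1 - W (C + WᵀW)⁻¹ Wᵀ` is positive
definite, since it equals `(1 + W C⁻¹ Wᵀ)⁻¹`. -/
lemma aux_one_sub_posDef {n p : ℕ} (C : Matrix (Fin n) (Fin n) ℝ)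
    (W : Matrix (Fin p) (Fin n) ℝ) (hC : C.PosDef) :
    (1 - W * (C + Wᵀ * W)⁻¹ * Wᵀ).PosDef := by
  have hWtW : (Wᵀ * W).PosSemidef := by
    simpa [conjTranspose_eq_transpose_of_trivial] using posSemidef_conjTranspose_mul_self W
  have hB : (C + Wᵀ * W).PosDef := hC.add_posSemidef hWtW
  have hCi : (C⁻¹).PosDef := hC.inv
  have hWCW : (W * C⁻¹ * Wᵀ).PosSemidef := by
    simpa [conjTranspose_eq_transpose_of_trivial, Matrix.mul_assoc] using
      hCi.posSemidef.mul_mul_conjTranspose_same W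
  have hD : (1 + W * C⁻¹ * Wᵀ).PosDef := Matrix.PosDef.one.add_posSemidef hWCW
  have hBinv : (C + Wᵀ * W) * (C + Wᵀ * W)⁻¹ = 1 :=
    Matrix.mul_nonsing_inv _ (Matrix.isUnit_iff_isUnit_det _ |>.mp hB.isUnit)
  have hCinv : C⁻¹ * C = 1 :=
    Matrix.nonsing_inv_mul _ (Matrix.isUnit_iff_isUnit_det _ |>.mp hC.isUnit)
  have key : (1 + W * C⁻¹ * Wᵀ) * (1 - W * (C + Wᵀ * W)⁻¹ * Wᵀ) = 1 := by
    have h1 : W * ((C + Wᵀ * W)⁻¹ * Wᵀ) = W * (C⁻¹ * (C * ((C + Wᵀ * W)⁻¹ * Wᵀ))) := by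
      rw [← Matrix.mul_assoc C⁻¹ C, hCinv, Matrix.one_mul]
    have h2 : W * ((C + Wᵀ * W)⁻¹ * Wᵀ)
        + W * (C⁻¹ * (Wᵀ * (W * ((C + Wᵀ * W)⁻¹ * Wᵀ)))) = W * (C⁻¹ * Wᵀ) := by
      nth_rewrite 1 [h1]
      rw [← Matrix.mul_add, ← Matrix.mul_add]
      congr 2
      calc C * ((C + Wᵀ * W)⁻¹ * Wᵀ) + Wᵀ * (W * ((C + Wᵀ * W)⁻¹ * Wᵀ))
          = (C + Wᵀ * W) * ((C + Wᵀ * W)⁻¹ * Wᵀ) := by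
            rw [Matrix.add_mul, Matrix.mul_assoc]
        _ = Wᵀ := by rw [← Matrix.mul_assoc, hBinv, Matrix.one_mul]
    simp only [Matrix.mul_sub, Matrix.mul_add, Matrix.sub_mul, Matrix.add_mul,
      Matrix.one_mul, Matrix.mul_one, Matrix.mul_assoc]
    rw [← h2]
    abel
  have hEq : 1 - W * (C + Wᵀ * W)⁻¹ * Wᵀ = (1 + W * C⁻¹ * Wᵀ)⁻¹ := by
    have := Matrix.inv_eq_right_inv key
    exact this.symm
  rw [hEq]
  exact hD.inv

/-- With `M₁ = W₁(I + W₁ᵀW₁)⁻¹W₁ᵀ` and `M₂ = W₂(I + W₂ᵀW₂ - M₁)⁻¹W₂ᵀ`,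
the matrix `M₂` is positive semi-definite and all of its eigenvalues are strictly
less than `1`. -/
theorem M2_posSemidef_and_eigenvalues_lt_one
    (n₀ n₁ p : ℕ) (W₁ : Matrix (Fin n₁) (Fin n₀) ℝ) (W₂ : Matrix (Fin p) (Fin n₁) ℝ) :
    let M₁ : Matrix (Fin n₁) (Fin n₁) ℝ := W₁ * (1 + W₁ᵀ * W₁)⁻¹ * W₁ᵀ
    let M₂ : Matrix (Fin p) (Fin p) ℝ := W₂ * (1 + W₂ᵀ * W₂ - M₁)⁻¹ * W₂ᵀ
    M₂.PosSemidef ∧ ∀ μ ∈ spectrum ℝ M₂, μ < 1 := by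
  intro M₁ M₂
  -- `1 - M₁` is positive definite
  have hM1 : (1 - M₁).PosDef := by
    have := aux_one_sub_posDef (1 : Matrix (Fin n₀) (Fin n₀) ℝ) W₁ Matrix.PosDef.one
    simpa [M₁] using this
  -- rewrite the middle matrix
  have hrw : 1 + W₂ᵀ * W₂ - M₁ = (1 - M₁) + W₂ᵀ * W₂ := by abel
  have hW2tW2 : (W₂ᵀ * W₂).PosSemidef := by
    simpa [conjTranspose_eq_transpose_of_trivial] using posSemidef_conjTranspose_mul_self W₂
  have hB : (1 + W₂ᵀ * W₂ - M₁).PosDef := by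
    rw [hrw]; exact hM1.add_posSemidef hW2tW2
  have hM2psd : M₂.PosSemidef := by
    have hBi : ((1 + W₂ᵀ * W₂ - M₁)⁻¹).PosSemidef := hB.inv.posSemidef
    simpa [M₂, conjTranspose_eq_transpose_of_trivial, Matrix.mul_assoc] using
      hBi.mul_mul_conjTranspose_same W₂
  have hOneSub : (1 - M₂).PosDef := by
    have := aux_one_sub_posDef (1 - M₁) W₂ hM1
    simpa [M₂, hrw] using this
  refine ⟨hM2psd, fun μ hμ => ?_⟩
  by_contra hlt
  push_neg at hlt
  -- then μ • 1 - M₂ is positive definite, hence a unit, contradiction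
  have hPD : (μ • (1 : Matrix (Fin p) (Fin p) ℝ) - M₂).PosDef := by
    have h1 : μ • (1 : Matrix (Fin p) (Fin p) ℝ) - M₂
        = (μ - 1) • (1 : Matrix (Fin p) (Fin p) ℝ) + (1 - M₂) := by
      rw [sub_smul, one_smul]; abel
    rw [h1]
    have hsmul : ((μ - 1) • (1 : Matrix (Fin p) (Fin p) ℝ)).PosSemidef := by
      rw [Matrix.smul_one_eq_diagonal]
      exact Matrix.posSemidef_diagonal_iff.mpr fun i => by simp [sub_nonneg.mpr hlt]
    exact Matrix.PosDef.posSemidef_add hsmul hOneSub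
  rw [spectrum.mem_iff] at hμ
  apply hμ
  have : (algebraMap ℝ (Matrix (Fin p) (Fin p) ℝ)) μ - M₂ = μ • 1 - M₂ := by
    rw [Algebra.algebraMap_eq_smul_one]
  rw [this]
  exact hPD.isUnit
end

section
/- With M₂ as above, every eigenvalue λ_i of M₂ (listed in decreasing order, i ≤ r = rank(M₂)) satisfies λ_i ≤ d_{2,i}²(1 + d_{1,1}²)/(d_{2,i}²(1 + d_{1,1}²) + 1), and hence Tr((I_p - M₂)⁻¹) ≤ p + Σ_{i=1}^r d_{2,i}²(1 + d_{1,1}²). -/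
/-!
With `c = (1 + d₁₁²)⁻¹`, the matrix `M₁ = W₁(1 + W₁ᵀW₁)⁻¹W₁ᵀ = (1 + W₁W₁ᵀ)⁻¹W₁W₁ᵀ` has eigenvalues
`μ / (1 + μ) ≤ 1 - c`, so `A = 1 + W₂ᵀW₂ - M₁` dominates `B = c + W₂ᵀW₂` in the Loewner order.
Inversion reverses that order, hence `M₂ = W₂ A⁻¹ W₂ᵀ ≤ W₂ B⁻¹ W₂ᵀ = (c + W₂W₂ᵀ)⁻¹ W₂W₂ᵀ`,
whose eigenvalues in decreasing order are `d₂ᵢ² / (c + d₂ᵢ²)`. Weyl's monotonicity theorem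
gives the eigenvalue bound. It implies `(1 - λᵢ)⁻¹ ≤ 1 + d₂ᵢ²(1 + d₁₁²)`, while `λᵢ = 0` for
`i ≥ rank M₂`; summing over an eigenbasis of `M₂` gives the trace bound.
-/

open Matrix Finset Submodule

theorem div_add_self_le_div_add_self {a b c : ℝ} (hc : 0 < c) (ha : 0 ≤ a) (hab : a ≤ b) :
    a / (c + a) ≤ b / (c + b) := by
  rw [div_le_div_iff₀ (by positivity) (by linarith)]
  nlinarith

theorem inv_one_sub_le_one_add {a f : ℝ} (hf : 0 ≤ f) (ha : a ≤ f / (f + 1)) :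
    (1 - a)⁻¹ ≤ 1 + f := by
  have h : (f + 1)⁻¹ ≤ 1 - a := by
    rw [show (f + 1)⁻¹ = 1 - f / (f + 1) by field_simp; ring]
    linarith
  calc (1 - a)⁻¹ ≤ ((f + 1)⁻¹)⁻¹ := inv_anti₀ (by positivity) h
    _ = 1 + f := by rw [inv_inv, add_comm]

namespace Matrix

variable {n : Type*} [Fintype n]

/-- Spanning is not required: `Fintype.card n` orthonormal vectors form a basis (`eq_sum`). -/
structure IsOrthonormalEigenbasis (A : Matrix n n ℝ) (v : n → n → ℝ) (μ : n → ℝ) : Prop where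
  dotProduct_self : ∀ k, v k ⬝ᵥ v k = 1
  dotProduct_eq_zero : Pairwise fun j k => v j ⬝ᵥ v k = 0
  mulVec_eq : ∀ k, A *ᵥ v k = μ k • v k

theorem IsHermitian.exists_isOrthonormalEigenbasis [DecidableEq n] {A : Matrix n n ℝ}
    (hA : A.IsHermitian) {μ : n → ℝ} (σ : Equiv.Perm n) (hσ : ∀ i, μ i = hA.eigenvalues (σ i)) :
    ∃ v, IsOrthonormalEigenbasis A v μ := by
  set b := hA.eigenvectorBasis
  have hinner (x y : EuclideanSpace ℝ n) : inner ℝ x y = ⇑x ⬝ᵥ ⇑y := by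
    simp [EuclideanSpace.inner_eq_star_dotProduct, dotProduct_comm]
  refine ⟨fun k => ⇑(b (σ k)), fun k => ?_, fun j k hjk => ?_, fun k => ?_⟩
  · rw [← hinner, real_inner_self_eq_norm_sq, b.orthonormal.1, one_pow]
  · dsimp only
    rw [← hinner, b.orthonormal.2 (σ.injective.ne hjk)]
  · rw [hσ, hA.mulVec_eigenvectorBasis]

namespace IsOrthonormalEigenbasis

variable {A B : Matrix n n ℝ} {v : n → n → ℝ} {μ ν : n → ℝ}

theorem transpose_mul_self [DecidableEq n] (h : IsOrthonormalEigenbasis A v μ) :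
    (of v)ᵀ * of v = 1 := by
  refine mul_eq_one_comm.mp (Matrix.ext fun j k => ?_)
  rw [mul_apply, one_apply]
  split_ifs with hjk
  · subst hjk; exact h.dotProduct_self j
  · exact h.dotProduct_eq_zero hjk

theorem eq_sum (h : IsOrthonormalEigenbasis A v μ) (y : n → ℝ) :
    y = ∑ k, (v k ⬝ᵥ y) • v k := by
  classical
  calc y = (of v)ᵀ *ᵥ (of v *ᵥ y) := by rw [mulVec_mulVec, h.transpose_mul_self, one_mulVec]
    _ = ∑ k, (v k ⬝ᵥ y) • v k := by rw [mulVec_transpose, vecMul_eq_sum]; rfl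

theorem dotProduct_sum_smul (h : IsOrthonormalEigenbasis A v μ) (c : n → ℝ) (j : n) :
    v j ⬝ᵥ ∑ k, c k • v k = c j := by
  rw [dotProduct_sum, Finset.sum_eq_single j (fun k _ hkj => by
    rw [dotProduct_smul, h.dotProduct_eq_zero hkj.symm, smul_zero]) (by simp),
    dotProduct_smul, h.dotProduct_self, smul_eq_mul, mul_one]

theorem mulVec_eq_sum (h : IsOrthonormalEigenbasis A v μ) (x : n → ℝ) :
    A *ᵥ x = ∑ k, (μ k * (v k ⬝ᵥ x)) • v k := by
  conv_lhs => rw [h.eq_sum x]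
  simp only [mulVec_sum, mulVec_smul, h.mulVec_eq, smul_smul, mul_comm]

theorem dotProduct_mulVec_eq_sum (h : IsOrthonormalEigenbasis A v μ) (x : n → ℝ) :
    x ⬝ᵥ A *ᵥ x = ∑ k, μ k * (v k ⬝ᵥ x) ^ 2 := by
  rw [mulVec_eq_sum h, dotProduct_sum]
  exact Finset.sum_congr rfl fun k _ => by rw [dotProduct_smul, smul_eq_mul, dotProduct_comm]; ring

theorem dotProduct_self_eq_sum (h : IsOrthonormalEigenbasis A v μ) (x : n → ℝ) :
    x ⬝ᵥ x = ∑ k, (v k ⬝ᵥ x) ^ 2 := by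
  nth_rewrite 1 [h.eq_sum x]
  rw [sum_dotProduct]
  exact Finset.sum_congr rfl fun k _ => by rw [smul_dotProduct, smul_eq_mul, sq]

theorem dotProduct_mulVec_le (h : IsOrthonormalEigenbasis A v μ) {t : ℝ} {x : n → ℝ}
    (hx : ∀ k, v k ⬝ᵥ x ≠ 0 → μ k ≤ t) : x ⬝ᵥ A *ᵥ x ≤ t * (x ⬝ᵥ x) := by
  rw [h.dotProduct_mulVec_eq_sum, h.dotProduct_self_eq_sum, Finset.mul_sum]
  refine Finset.sum_le_sum fun k _ => ?_
  by_cases hk : v k ⬝ᵥ x = 0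
  · simp [hk]
  · exact mul_le_mul_of_nonneg_right (hx k hk) (sq_nonneg _)

theorem le_dotProduct_mulVec (h : IsOrthonormalEigenbasis A v μ) {t : ℝ} {x : n → ℝ}
    (hx : ∀ k, v k ⬝ᵥ x ≠ 0 → t ≤ μ k) : t * (x ⬝ᵥ x) ≤ x ⬝ᵥ A *ᵥ x := by
  rw [h.dotProduct_mulVec_eq_sum, h.dotProduct_self_eq_sum, Finset.mul_sum]
  refine Finset.sum_le_sum fun k _ => ?_
  by_cases hk : v k ⬝ᵥ x = 0
  · simp [hk]
  · exact mul_le_mul_of_nonneg_right (hx k hk) (sq_nonneg _)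

theorem mem_of_dotProduct_ne_zero (h : IsOrthonormalEigenbasis A v μ) {s : Set n}
    {x : n → ℝ} (hx : x ∈ span ℝ (v '' s)) {k : n} (hk : v k ⬝ᵥ x ≠ 0) : k ∈ s := by
  by_contra hks
  refine hk ?_
  clear hk
  induction hx using Submodule.span_induction with
  | mem y hy =>
    obtain ⟨j, hj, rfl⟩ := hy
    exact h.dotProduct_eq_zero fun hkj => hks (hkj ▸ hj)
  | zero => exact dotProduct_zero _
  | add y z _ _ hy hz => rw [dotProduct_add, hy, hz, add_zero]
  | smul c y _ hy => rw [dotProduct_smul, hy, smul_zero]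

theorem linearIndependent (h : IsOrthonormalEigenbasis A v μ) : LinearIndependent ℝ v := by
  rw [Fintype.linearIndependent_iff]
  intro c hc j
  simpa [hc] using (h.dotProduct_sum_smul c j).symm

theorem finrank_span_image (h : IsOrthonormalEigenbasis A v μ) (s : Finset n) :
    Module.finrank ℝ (span ℝ (v '' s)) = #s := by
  rw [Set.image_eq_range]
  exact (finrank_span_eq_card (h.linearIndependent.comp ((↑) : s → n) Subtype.val_injective)).trans
    (Fintype.card_coe s)

theorem trace_eq (h : IsOrthonormalEigenbasis A v μ) : A.trace = ∑ k, μ k := by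
  classical
  have hAV : A * (of v)ᵀ = (of v)ᵀ * diagonal μ := by
    ext i k
    simpa [mul_diagonal, mulVec, dotProduct, mul_apply, mul_comm, diagonal_apply] using
      congrFun (h.mulVec_eq k) i
  calc A.trace = (of v * (A * (of v)ᵀ)).trace := by
        rw [← Matrix.mul_assoc, trace_mul_comm, ← Matrix.mul_assoc, h.transpose_mul_self,
          Matrix.one_mul]
    _ = ∑ k, μ k := by
        rw [hAV, ← Matrix.mul_assoc, mul_eq_one_comm.mp h.transpose_mul_self, Matrix.one_mul,
          trace_diagonal]

theorem eigenvalue_eq (h : IsOrthonormalEigenbasis A v μ) (k : n) :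
    μ k = v k ⬝ᵥ A *ᵥ v k := by
  rw [h.mulVec_eq, dotProduct_smul, h.dotProduct_self, smul_eq_mul, mul_one]

theorem mul (h : IsOrthonormalEigenbasis A v μ) (h' : IsOrthonormalEigenbasis B v ν) :
    IsOrthonormalEigenbasis (A * B) v (fun k => μ k * ν k) :=
  ⟨h.dotProduct_self, h.dotProduct_eq_zero, fun k => by
      rw [← mulVec_mulVec, h'.mulVec_eq, mulVec_smul, h.mulVec_eq, smul_smul, mul_comm]⟩

theorem smul_one_add [DecidableEq n] (h : IsOrthonormalEigenbasis A v μ) (c : ℝ) :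
    IsOrthonormalEigenbasis (c • 1 + A) v (fun k => c + μ k) :=
  ⟨h.dotProduct_self, h.dotProduct_eq_zero, fun k => by
      rw [add_mulVec, smul_mulVec, one_mulVec, h.mulVec_eq, add_smul]⟩

theorem one_sub [DecidableEq n] (h : IsOrthonormalEigenbasis A v μ) :
    IsOrthonormalEigenbasis (1 - A) v (fun k => 1 - μ k) :=
  ⟨h.dotProduct_self, h.dotProduct_eq_zero, fun k => by
    rw [sub_mulVec, one_mulVec, h.mulVec_eq, sub_smul, one_smul]⟩

theorem isUnit [DecidableEq n] (h : IsOrthonormalEigenbasis A v μ) (hμ : ∀ k, μ k ≠ 0) :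
    IsUnit A := by
  refine mulVec_injective_iff_isUnit.mp fun x y hxy => ?_
  rw [h.eq_sum x, h.eq_sum y]
  refine Finset.sum_congr rfl fun k _ => congrArg (· • v k) ?_
  have hcoeff := congrArg (v k ⬝ᵥ ·) hxy
  simp only [h.mulVec_eq_sum, h.dotProduct_sum_smul] at hcoeff
  exact mul_left_cancel₀ (hμ k) hcoeff

theorem inv [DecidableEq n] (h : IsOrthonormalEigenbasis A v μ) (hμ : ∀ k, μ k ≠ 0) :
    IsOrthonormalEigenbasis A⁻¹ v (fun k => (μ k)⁻¹) :=
  ⟨h.dotProduct_self, h.dotProduct_eq_zero, fun k => by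
      have hA : A⁻¹ * A = 1 := nonsing_inv_mul A ((isUnit_iff_isUnit_det A).mp (h.isUnit hμ))
      calc A⁻¹ *ᵥ v k = (μ k)⁻¹ • A⁻¹ *ᵥ (μ k • v k) := by
            rw [mulVec_smul, smul_smul, inv_mul_cancel₀ (hμ k), one_smul]
        _ = (μ k)⁻¹ • v k := by rw [← h.mulVec_eq, mulVec_mulVec, hA, one_mulVec]⟩

theorem trace_inv_one_sub_le [DecidableEq n] (h : IsOrthonormalEigenbasis A v μ) {f : n → ℝ}
    (hf : ∀ i, 0 ≤ f i) (hle : ∀ i, μ i ≤ f i / (f i + 1)) {s : Finset n}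
    (hzero : ∀ i ∉ s, μ i = 0) : (1 - A)⁻¹.trace ≤ Fintype.card n + ∑ i ∈ s, f i := by
  have hlt : ∀ i, μ i < 1 := fun i =>
    (hle i).trans_lt ((div_lt_one (by linarith [hf i])).mpr (by linarith))
  rw [(h.one_sub.inv fun i => by linarith [hlt i]).trace_eq]
  calc ∑ i, (1 - μ i)⁻¹ ≤ ∑ i, (1 + if i ∈ s then f i else 0) := by
        refine Finset.sum_le_sum fun i _ => ?_
        split_ifs with hi
        · exact inv_one_sub_le_one_add (hf i) (hle i)
        · simp [hzero i hi]
    _ = Fintype.card n + ∑ i ∈ s, f i := by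
        rw [Finset.sum_add_distrib, Finset.sum_ite_mem, Finset.univ_inter]
        simp

/-- Weyl's monotonicity theorem: some nonzero `x` lies both in the span of the first `i + 1`
eigenvectors of `A` and in the span of the last `m - i` eigenvectors of `B`. -/
theorem le_of_forall_dotProduct_mulVec_le {m : ℕ} {A B : Matrix (Fin m) (Fin m) ℝ}
    {v w : Fin m → Fin m → ℝ} {μ ν : Fin m → ℝ} (hA : IsOrthonormalEigenbasis A v μ)
    (hμ : Antitone μ) (hB : IsOrthonormalEigenbasis B w ν) (hν : Antitone ν)
    (hAB : ∀ x, x ⬝ᵥ A *ᵥ x ≤ x ⬝ᵥ B *ᵥ x) (i : Fin m) : μ i ≤ ν i := by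
  set S := span ℝ (v '' ↑(Iic i))
  set T := span ℝ (w '' ↑(Ici i))
  obtain ⟨x, hxST, hx0⟩ : ∃ x ∈ S ⊓ T, x ≠ 0 := by
    refine Submodule.exists_mem_ne_zero_of_ne_bot (Submodule.one_le_finrank_iff.mp ?_)
    have hsum := Submodule.finrank_sup_add_finrank_inf_eq S T
    have hsup := (S ⊔ T).finrank_le
    simp only [S, T, hA.finrank_span_image, hB.finrank_span_image, Fin.card_Iic, Fin.card_Ici,
      Module.finrank_fin_fun] at hsum hsup ⊢
    omega
  have hlow : μ i * (x ⬝ᵥ x) ≤ x ⬝ᵥ A *ᵥ x := hA.le_dotProduct_mulVec fun k hk =>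
    hμ (by simpa using hA.mem_of_dotProduct_ne_zero hxST.1 hk)
  have hup : x ⬝ᵥ B *ᵥ x ≤ ν i * (x ⬝ᵥ x) := hB.dotProduct_mulVec_le fun k hk =>
    hν (by simpa using hB.mem_of_dotProduct_ne_zero hxST.2 hk)
  have hpos : 0 < x ⬝ᵥ x := by simpa using dotProduct_star_self_pos_iff.mpr hx0
  nlinarith [hAB x]

end IsOrthonormalEigenbasis

section LoewnerOrder

variable [DecidableEq n] {A B : Matrix n n ℝ}

theorem isUnit_of_posDef_of_forall_le (hB : B.PosDef)
    (hBA : ∀ y, y ⬝ᵥ B *ᵥ y ≤ y ⬝ᵥ A *ᵥ y) : IsUnit A := by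
  refine mulVec_injective_iff_isUnit.mp ((injective_iff_map_eq_zero (mulVecLin A)).mpr
    fun y hy => by_contra fun hy0 => ?_)
  have hpos := hB.dotProduct_mulVec_pos hy0
  have hle := hBA y
  rw [star_trivial] at hpos
  rw [mulVecLin_apply] at hy
  rw [hy, dotProduct_zero] at hle
  linarith

theorem mulVec_inv_mulVec {A : Matrix n n ℝ} (hA : IsUnit A) (x : n → ℝ) :
    A *ᵥ (A⁻¹ *ᵥ x) = x := by
  rw [mulVec_mulVec, mul_nonsing_inv A ((isUnit_iff_isUnit_det A).mp hA), one_mulVec]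

theorem dotProduct_inv_mulVec_nonneg_of_forall_le (hB : B.PosDef)
    (hBA : ∀ y, y ⬝ᵥ B *ᵥ y ≤ y ⬝ᵥ A *ᵥ y) (x : n → ℝ) : 0 ≤ x ⬝ᵥ A⁻¹ *ᵥ x := by
  calc 0 ≤ A⁻¹ *ᵥ x ⬝ᵥ B *ᵥ (A⁻¹ *ᵥ x) := by
        simpa using hB.posSemidef.dotProduct_mulVec_nonneg (A⁻¹ *ᵥ x)
    _ ≤ A⁻¹ *ᵥ x ⬝ᵥ A *ᵥ (A⁻¹ *ᵥ x) := hBA _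
    _ = x ⬝ᵥ A⁻¹ *ᵥ x := by
        rw [mulVec_inv_mulVec (isUnit_of_posDef_of_forall_le hB hBA), dotProduct_comm]

theorem dotProduct_inv_mulVec_le_of_forall_le (hB : B.PosDef)
    (hBA : ∀ y, y ⬝ᵥ B *ᵥ y ≤ y ⬝ᵥ A *ᵥ y) (x : n → ℝ) :
    x ⬝ᵥ A⁻¹ *ᵥ x ≤ x ⬝ᵥ B⁻¹ *ᵥ x := by
  set y := A⁻¹ *ᵥ x
  set z := B⁻¹ *ᵥ x
  have hAy : A *ᵥ y = x := mulVec_inv_mulVec (isUnit_of_posDef_of_forall_le hB hBA) x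
  have hBz : B *ᵥ z = x := mulVec_inv_mulVec hB.isUnit x
  have hzBy : z ⬝ᵥ B *ᵥ y = x ⬝ᵥ y := by
    rw [dotProduct_mulVec, ← mulVec_transpose, ← conjTranspose_eq_transpose_of_trivial,
      hB.isHermitian.eq, hBz]
  -- completing the square
  have hsq : 0 ≤ (y - z) ⬝ᵥ B *ᵥ (y - z) := by
    simpa using hB.posSemidef.dotProduct_mulVec_nonneg (y - z)
  rw [mulVec_sub, sub_dotProduct, dotProduct_sub, dotProduct_sub, hzBy, hBz] at hsq
  have hy := hBA y
  rw [hAy, dotProduct_comm y x] at hy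
  rw [dotProduct_comm y x, dotProduct_comm z x] at hsq
  linarith

end LoewnerOrder

section Gram

variable {m : Type*} [Fintype m]

theorem dotProduct_mul_mul_transpose (W : Matrix m n ℝ) (C : Matrix n n ℝ) (x : m → ℝ) :
    x ⬝ᵥ (W * C * Wᵀ) *ᵥ x = (Wᵀ *ᵥ x) ⬝ᵥ C *ᵥ (Wᵀ *ᵥ x) := by
  rw [← mulVec_mulVec, ← mulVec_mulVec, dotProduct_mulVec x, ← mulVec_transpose]

theorem IsOrthonormalEigenbasis.eigenvalue_nonneg {W : Matrix m n ℝ} {v : m → m → ℝ}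
    {ν : m → ℝ} (h : IsOrthonormalEigenbasis (W * Wᵀ) v ν) (k : m) : 0 ≤ ν k := by
  rw [h.eigenvalue_eq, ← mulVec_mulVec, dotProduct_mulVec, ← mulVec_transpose]
  exact Finset.sum_nonneg fun i _ => mul_self_nonneg _

variable [DecidableEq n]

theorem posDef_smul_one_add_transpose_mul (W : Matrix m n ℝ) {c : ℝ} (hc : 0 < c) :
    (c • 1 + Wᵀ * W).PosDef := by
  simpa [conjTranspose_eq_transpose_of_trivial] using
    (PosDef.one.smul hc).add_posSemidef (posSemidef_conjTranspose_mul_self W)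

theorem mul_inv_smul_one_add_transpose_mul [DecidableEq m] (W : Matrix m n ℝ) {c : ℝ}
    (hc : 0 < c) :
    W * (c • 1 + Wᵀ * W)⁻¹ = (c • 1 + W * Wᵀ)⁻¹ * W := by
  have hP := (isUnit_iff_isUnit_det _).mp (posDef_smul_one_add_transpose_mul W hc).isUnit
  have hQ := (isUnit_iff_isUnit_det _).mp (posDef_smul_one_add_transpose_mul Wᵀ hc).isUnit
  rw [transpose_transpose] at hQ
  have key : (c • 1 + W * Wᵀ) * W = W * (c • 1 + Wᵀ * W) := by
    simp only [Matrix.add_mul, Matrix.mul_add, Matrix.smul_mul, Matrix.mul_smul, Matrix.one_mul,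
      Matrix.mul_one, Matrix.mul_assoc]
  calc W * (c • 1 + Wᵀ * W)⁻¹
      = (c • 1 + W * Wᵀ)⁻¹ * ((c • 1 + W * Wᵀ) * W) * (c • 1 + Wᵀ * W)⁻¹ := by
        rw [nonsing_inv_mul_cancel_left _ W hQ]
    _ = (c • 1 + W * Wᵀ)⁻¹ * W := by
        rw [key, Matrix.mul_assoc, Matrix.mul_assoc, mul_nonsing_inv _ hP, Matrix.mul_one]

theorem IsOrthonormalEigenbasis.mul_inv_smul_one_add_mul_transpose [DecidableEq m]
    {W : Matrix m n ℝ} {v : m → m → ℝ} {ν : m → ℝ} (h : IsOrthonormalEigenbasis (W * Wᵀ) v ν)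
    {c : ℝ} (hc : 0 < c) :
    IsOrthonormalEigenbasis (W * (c • 1 + Wᵀ * W)⁻¹ * Wᵀ) v (fun k => ν k / (c + ν k)) := by
  rw [mul_inv_smul_one_add_transpose_mul W hc, Matrix.mul_assoc]
  simpa only [div_eq_inv_mul] using
    ((h.smul_one_add c).inv fun k => by have := h.eigenvalue_nonneg k; positivity).mul h

theorem smul_one_add_le_one_add_sub {l : Type*} [Fintype l] [DecidableEq l]
    {W₁ : Matrix n l ℝ} (W₂ : Matrix m n ℝ) {u : n → n → ℝ} {μ : n → ℝ}
    (hu : IsOrthonormalEigenbasis (W₁ * W₁ᵀ) u μ) {s : ℝ} (hs : 0 ≤ s) (hμ : ∀ k, μ k ≤ s)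
    (y : n → ℝ) :
    y ⬝ᵥ ((1 + s)⁻¹ • 1 + W₂ᵀ * W₂) *ᵥ y ≤
      y ⬝ᵥ (1 + W₂ᵀ * W₂ - W₁ * (1 + W₁ᵀ * W₁)⁻¹ * W₁ᵀ) *ᵥ y := by
  have hM₁ := hu.mul_inv_smul_one_add_mul_transpose one_pos
  rw [one_smul] at hM₁
  have hle := hM₁.dotProduct_mulVec_le (x := y) fun k _ =>
    div_add_self_le_div_add_self one_pos (hu.eigenvalue_nonneg k) (hμ k)
  have : s / (1 + s) = 1 - (1 + s)⁻¹ := by field_simp; ring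
  simp only [add_mulVec, sub_mulVec, smul_mulVec, one_mulVec, dotProduct_add, dotProduct_sub,
    dotProduct_smul, smul_eq_mul]
  rw [this] at hle
  linarith

end Gram

theorem IsHermitian.eigenvalue_eq_zero_of_rank_le {p : ℕ} {M : Matrix (Fin p) (Fin p) ℝ}
    (hM : M.IsHermitian) {lam : Fin p → ℝ} (hanti : Antitone lam) (hnonneg : ∀ i, 0 ≤ lam i)
    (σ : Equiv.Perm (Fin p)) (hσ : ∀ i, lam i = hM.eigenvalues (σ i)) {j : Fin p}
    (hj : M.rank ≤ j) : lam j = 0 := by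
  by_contra hne
  have hrank : M.rank = #{i | lam i ≠ 0} := by
    rw [hM.rank_eq_card_non_zero_eigs, ← Fintype.card_subtype]
    exact Fintype.card_congr (σ.subtypeEquiv fun i => by rw [hσ]).symm
  have hsub : Iic j ⊆ ({i | lam i ≠ 0} : Finset (Fin p)) := fun i hi => by
    simpa using ((hnonneg j).lt_of_ne (Ne.symm hne)).trans_le (hanti (mem_Iic.mp hi)) |>.ne'
  have := card_le_card hsub
  rw [Fin.card_Iic] at this
  omega

end Matrix

theorem M2_eigenvalue_bounds_and_trace_bound_general
    (n₀ n₁ p : ℕ) (W₁ : Matrix (Fin n₁) (Fin n₀) ℝ) (W₂ : Matrix (Fin p) (Fin n₁) ℝ)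
    (M₂ : Matrix (Fin p) (Fin p) ℝ)
    (hM₂def : M₂ = W₂ * (1 + W₂ᵀ * W₂ - W₁ * (1 + W₁ᵀ * W₁)⁻¹ * W₁ᵀ)⁻¹ * W₂ᵀ)
    -- the largest singular value of W₁
    (d11 : ℝ)
    (hW₁ : (W₁ * W₁ᵀ).IsHermitian)
    (hd11 : IsGreatest (Set.range hW₁.eigenvalues) (d11 ^ 2))
    -- the singular values of W₂, in decreasing order
    (d2 : Fin p → ℝ) (hd2_nonneg : ∀ i, 0 ≤ d2 i) (hd2_anti : Antitone d2)
    (hW₂ : (W₂ * W₂ᵀ).IsHermitian)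
    (hd2 : ∃ σ : Equiv.Perm (Fin p), ∀ i, d2 i ^ 2 = hW₂.eigenvalues (σ i))
    -- the eigenvalues of M₂, in decreasing order
    (hM₂ : M₂.IsHermitian)
    (lam : Fin p → ℝ) (hlam_anti : Antitone lam)
    (hlam : ∃ σ : Equiv.Perm (Fin p), ∀ i, lam i = hM₂.eigenvalues (σ i)) :
    (∀ i : Fin p, (i : ℕ) < M₂.rank →
        lam i ≤ d2 i ^ 2 * (1 + d11 ^ 2) / (d2 i ^ 2 * (1 + d11 ^ 2) + 1)) ∧
      Matrix.trace (1 - M₂)⁻¹ ≤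
        (p : ℝ) + ∑ i ∈ Finset.univ.filter (fun i : Fin p => (i : ℕ) < M₂.rank),
          d2 i ^ 2 * (1 + d11 ^ 2) := by
  classical
  obtain ⟨σ, hσ⟩ := hlam
  obtain ⟨σ₂, hσ₂⟩ := hd2
  obtain ⟨u, hu⟩ := hW₁.exists_isOrthonormalEigenbasis (Equiv.refl _) fun _ => rfl
  obtain ⟨v, hv⟩ := hM₂.exists_isOrthonormalEigenbasis σ hσ
  obtain ⟨w, hw⟩ := hW₂.exists_isOrthonormalEigenbasis σ₂ hσ₂
  set c := (1 + d11 ^ 2)⁻¹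
  have hc : 0 < c := by positivity
  have hB := posDef_smul_one_add_transpose_mul W₂ hc
  have hBA := smul_one_add_le_one_add_sub W₂ hu (sq_nonneg d11) fun k => hd11.2 ⟨k, rfl⟩
  have hM₂N : ∀ x, x ⬝ᵥ M₂ *ᵥ x ≤ x ⬝ᵥ (W₂ * (c • 1 + W₂ᵀ * W₂)⁻¹ * W₂ᵀ) *ᵥ x := fun x => by
    simpa only [hM₂def, dotProduct_mul_mul_transpose] using
      dotProduct_inv_mulVec_le_of_forall_le hB hBA (W₂ᵀ *ᵥ x)
  have hbound (i : Fin p) : lam i ≤ d2 i ^ 2 * (1 + d11 ^ 2) / (d2 i ^ 2 * (1 + d11 ^ 2) + 1) := by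
    have := hv.le_of_forall_dotProduct_mulVec_le hlam_anti
      (hw.mul_inv_smul_one_add_mul_transpose hc) (fun a b hab => div_add_self_le_div_add_self hc
        (sq_nonneg _) (pow_le_pow_left₀ (hd2_nonneg b) (hd2_anti hab) 2)) hM₂N i
    convert this using 1
    simp only [c]
    field_simp
    ring
  have hlam_nonneg (i : Fin p) : 0 ≤ lam i := by
    rw [hv.eigenvalue_eq, hM₂def, dotProduct_mul_mul_transpose]
    exact dotProduct_inv_mulVec_nonneg_of_forall_le hB hBA _
  refine ⟨fun i _ => hbound i, ?_⟩
  simpa using hv.trace_inv_one_sub_le (fun i => by positivity) hbound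
    (s := {i | (i : ℕ) < M₂.rank}) fun i hi =>
      hM₂.eigenvalue_eq_zero_of_rank_le hlam_anti hlam_nonneg σ hσ (by simpa using hi)

/-- Every eigenvalue `λ i` of `M₂` (listed in decreasing order, `i < r = rank M₂`)
satisfies `λ i ≤ d₂ᵢ²(1 + d₁₁²)/(d₂ᵢ²(1 + d₁₁²) + 1)`, hence
`Tr((I - M₂)⁻¹) ≤ p + ∑_{i<r} d₂ᵢ²(1 + d₁₁²)`, where `d₁₁` is the largest singular value
of `W₁` and `d₂ᵢ` are the singular values of `W₂` in decreasing order. -/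
theorem M2_eigenvalue_bounds_and_trace_bound
    (n₀ n₁ p : ℕ) (W₁ : Matrix (Fin n₁) (Fin n₀) ℝ) (W₂ : Matrix (Fin p) (Fin n₁) ℝ)
    (M₂ : Matrix (Fin p) (Fin p) ℝ)
    (hM₂def : M₂ = W₂ * (1 + W₂ᵀ * W₂ - W₁ * (1 + W₁ᵀ * W₁)⁻¹ * W₁ᵀ)⁻¹ * W₂ᵀ)
    -- the largest singular value of W₁
    (d11 : ℝ) (hd11_nonneg : 0 ≤ d11)
    (hW₁ : (W₁ * W₁ᵀ).IsHermitian)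
    (hd11 : IsGreatest (Set.range hW₁.eigenvalues) (d11 ^ 2))
    -- the singular values of W₂, in decreasing order
    (d2 : Fin p → ℝ) (hd2_nonneg : ∀ i, 0 ≤ d2 i) (hd2_anti : Antitone d2)
    (hW₂ : (W₂ * W₂ᵀ).IsHermitian)
    (hd2 : ∃ σ : Equiv.Perm (Fin p), ∀ i, d2 i ^ 2 = hW₂.eigenvalues (σ i))
    -- the eigenvalues of M₂, in decreasing order
    (hM₂ : M₂.IsHermitian)
    (lam : Fin p → ℝ) (hlam_anti : Antitone lam)
    (hlam : ∃ σ : Equiv.Perm (Fin p), ∀ i, lam i = hM₂.eigenvalues (σ i)) :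
    (∀ i : Fin p, (i : ℕ) < M₂.rank →
        lam i ≤ d2 i ^ 2 * (1 + d11 ^ 2) / (d2 i ^ 2 * (1 + d11 ^ 2) + 1)) ∧
      Matrix.trace (1 - M₂)⁻¹ ≤
        (p : ℝ) + ∑ i ∈ Finset.univ.filter (fun i : Fin p => (i : ℕ) < M₂.rank),
          d2 i ^ 2 * (1 + d11 ^ 2) :=
  M2_eigenvalue_bounds_and_trace_bound_general n₀ n₁ p W₁ W₂ M₂ hM₂def d11 hW₁ hd11 d2 hd2_nonneg
    hd2_anti hW₂ hd2 hM₂ lam hlam_anti hlam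
end

section
/- Define recursively m_{1,i} = d_{1,i}², and m_{ℓ,i} = d_{ℓ,i}²(m_{ℓ-1,1} + 1) for ℓ ≥ 2. Then for every d ≥ 1 and every i ≤ r, the i-th largest eigenvalue of (I_p - M_d)⁻¹ is at most m_{d,i} + 1, where M_d is the recursively defined matrix M_ℓ = W_ℓ(I + W_ℓᵀW_ℓ - M_{ℓ-1})⁻¹W_ℓᵀ (with M₀ = 0). Consequently Tr((I_p - M_d)⁻¹) ≤ p + Σ_{i=1}^r m_{d,i}. -/
/-!
By the Woodbury identity the recursion reads `(I - M_ℓ)⁻¹ = I + W_ℓ (I - M_{ℓ-1})⁻¹ W_ℓᵀ`. By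
induction `I - M_ℓ` is positive definite and `(I - M_ℓ)⁻¹ ≤ (m_{ℓ,1} + 1) I` in the Loewner order,
since `W_ℓ W_ℓᵀ ≤ d_{ℓ,1}² I`. Hence `(I - M_d)⁻¹ ≤ I + (m_{d-1,1} + 1) W_d W_dᵀ`, whose `i`-th
largest eigenvalue is exactly `m_{d,i} + 1`, and Weyl's monotonicity principle compares the two
spectra. For `i ≥ r` we have `d_{d,i} = 0`, so these bounds equal `1`, which gives the trace bound.
-/

open Matrix

/-- The recursively defined matrices `M_ℓ = W_ℓ (I + W_ℓᵀ W_ℓ - M_{ℓ-1})⁻¹ W_ℓᵀ`, `M₀ = 0`. -/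
noncomputable def Mrec (p : ℕ) (W : ℕ → Matrix (Fin p) (Fin p) ℝ) : ℕ → Matrix (Fin p) (Fin p) ℝ
  | 0 => 0
  | (k + 1) => W (k + 1) * (1 + (W (k + 1))ᵀ * W (k + 1) - Mrec p W k)⁻¹ * (W (k + 1))ᵀ

/-- The recursively defined constants `m_{ℓ,i} = d_{ℓ,i}² (m_{ℓ-1,1} + 1)`, `m_{0,·} = 0`,
so that `m_{1,i} = d_{1,i}²`.  Here `dsv ℓ` lists the singular values of `W_ℓ` in
decreasing order, so `m_{ℓ-1,1}` is `mrec … (ℓ-1) ⟨0, hp⟩`. -/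
def mrec (p : ℕ) (hp : 0 < p) (dsv : ℕ → Fin p → ℝ) : ℕ → Fin p → ℝ
  | 0 => fun _ => 0
  | (k + 1) => fun i => dsv (k + 1) i ^ 2 * (mrec p hp dsv k ⟨0, hp⟩ + 1)

open scoped MatrixOrder RealInnerProductSpace

namespace OrthonormalBasis

variable {ι E : Type*} [Fintype ι] [NormedAddCommGroup E] [InnerProductSpace ℝ E]
  (b : OrthonormalBasis ι ℝ E) {T : E →ₗ[ℝ] E} {α : ι → ℝ}

theorem inner_map_self_eq_sum (hT : ∀ j, T (b j) = α j • b j) (x : E) :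
    ⟪x, T x⟫ = ∑ j, α j * ⟪b j, x⟫ ^ 2 := by
  have hTx : T x = ∑ j, (α j * ⟪b j, x⟫) • b j := by
    conv_lhs => rw [← b.sum_repr' x]
    simp only [map_sum, map_smul, hT, smul_smul, mul_comm]
  simp only [hTx, inner_sum, inner_smul_right, real_inner_comm x, sq, mul_assoc]

theorem mul_norm_sq_le_inner_map_self (hT : ∀ j, T (b j) = α j • b j) {x : E} {t : ℝ}
    (h : ∀ j, ⟪b j, x⟫ ≠ 0 → t ≤ α j) : t * ‖x‖ ^ 2 ≤ ⟪x, T x⟫ := by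
  rw [b.inner_map_self_eq_sum hT, ← b.sum_sq_inner_right, Finset.mul_sum]
  refine Finset.sum_le_sum fun j _ => ?_
  by_cases hj : ⟪b j, x⟫ = 0
  · simp [hj]
  · exact mul_le_mul_of_nonneg_right (h j hj) (sq_nonneg _)

theorem inner_map_self_le_mul_norm_sq (hT : ∀ j, T (b j) = α j • b j) {x : E} {t : ℝ}
    (h : ∀ j, ⟪b j, x⟫ ≠ 0 → α j ≤ t) : ⟪x, T x⟫ ≤ t * ‖x‖ ^ 2 := by
  rw [b.inner_map_self_eq_sum hT, ← b.sum_sq_inner_right, Finset.mul_sum]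
  refine Finset.sum_le_sum fun j _ => ?_
  by_cases hj : ⟪b j, x⟫ = 0
  · simp [hj]
  · exact mul_le_mul_of_nonneg_right (h j hj) (sq_nonneg _)

end OrthonormalBasis

theorem exists_ne_zero_forall_inner_eq_zero {ι E : Type*} [Fintype ι] [NormedAddCommGroup E]
    [InnerProductSpace ℝ E] [FiniteDimensional ℝ E] (f : ι → E)
    (hcard : Fintype.card ι < Module.finrank ℝ E) : ∃ x ≠ 0, ∀ j, ⟪f j, x⟫ = 0 := by
  set K := Submodule.span ℝ (Set.range f)
  have hK : K ≠ ⊤ := fun h => by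
    have : Module.finrank ℝ K ≤ Fintype.card ι := finrank_range_le_card f
    rw [h, finrank_top] at this
    omega
  obtain ⟨x, hx, hx0⟩ := Submodule.exists_mem_ne_zero_of_ne_bot
    (mt Submodule.orthogonal_eq_bot_iff.mp hK)
  exact ⟨x, hx0, fun j => Submodule.inner_right_of_mem_orthogonal
    (Submodule.subset_span (Set.mem_range_self j)) hx⟩

/-- Weyl's monotonicity principle. A nonzero `x` orthogonal to the `u j` with `j > i` and to the
`v j` with `j < i` exists by counting dimensions, and for it
`α i ‖x‖² ≤ ⟪x, T x⟫ ≤ ⟪x, S x⟫ ≤ β i ‖x‖²`. -/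
theorem LinearMap.eigenvalue_le_of_le {E : Type*} [NormedAddCommGroup E] [InnerProductSpace ℝ E]
    {n : ℕ} {T S : E →ₗ[ℝ] E} (hTS : T ≤ S) (u v : OrthonormalBasis (Fin n) ℝ E)
    {α β : Fin n → ℝ} (hα : Antitone α) (hβ : Antitone β)
    (hu : ∀ j, T (u j) = α j • u j) (hv : ∀ j, S (v j) = β j • v j) (i : Fin n) :
    α i ≤ β i := by
  have : FiniteDimensional ℝ E := u.toBasis.finiteDimensional_of_finite
  have hcard : Fintype.card (Finset.Ioi i ⊕ Finset.Iio i) < Module.finrank ℝ E := by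
    rw [Fintype.card_sum, Fintype.card_coe, Fintype.card_coe, Fin.card_Ioi, Fin.card_Iio,
      Module.finrank_eq_card_basis u.toBasis, Fintype.card_fin]
    omega
  obtain ⟨x, hx0, hx⟩ := exists_ne_zero_forall_inner_eq_zero
    (Sum.elim (fun j : Finset.Ioi i => u j) (fun j : Finset.Iio i => v j)) hcard
  have hlow : α i * ‖x‖ ^ 2 ≤ ⟪x, T x⟫ := u.mul_norm_sq_le_inner_map_self hu fun j hj =>
    hα (not_lt.mp fun hij => hj (hx (.inl ⟨j, Finset.mem_Ioi.mpr hij⟩)))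
  have hup : ⟪x, S x⟫ ≤ β i * ‖x‖ ^ 2 := v.inner_map_self_le_mul_norm_sq hv fun j hj =>
    hβ (not_lt.mp fun hji => hj (hx (.inr ⟨j, Finset.mem_Iio.mpr hji⟩)))
  have hmid : ⟪x, T x⟫ ≤ ⟪x, S x⟫ := by
    have := hTS.inner_nonneg_right x
    rwa [LinearMap.sub_apply, inner_sub_right, sub_nonneg] at this
  exact le_of_mul_le_mul_right (hlow.trans (hmid.trans hup)) (by positivity)

namespace Matrix

variable {n : Type*} [Fintype n] [DecidableEq n]

theorem toEuclideanLin_le_toEuclideanLin {A B : Matrix n n ℝ} (h : A ≤ B) :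
    toEuclideanLin A ≤ toEuclideanLin B := by
  rwa [LinearMap.le_def, ← map_sub, isPositive_toEuclideanLin_iff]

namespace IsHermitian

variable {A : Matrix n n ℝ} (hA : A.IsHermitian)
include hA

theorem toEuclideanLin_eigenvectorBasis (j : n) :
    toEuclideanLin A (hA.eigenvectorBasis j) = hA.eigenvalues j • hA.eigenvectorBasis j := by
  ext1
  simp [toLpLin_apply, hA.mulVec_eigenvectorBasis]

theorem toEuclideanLin_one_add_smul_eigenvectorBasis (c : ℝ) (j : n) :
    toEuclideanLin (1 + c • A) (hA.eigenvectorBasis j) =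
      (1 + c * hA.eigenvalues j) • hA.eigenvectorBasis j := by
  simp only [map_add, map_smul, LinearMap.add_apply, LinearMap.smul_apply, toLpLin_one,
    LinearMap.id_apply, hA.toEuclideanLin_eigenvectorBasis]
  module

theorem le_smul_one_of_eigenvalues_le {t : ℝ} (h : ∀ i, hA.eigenvalues i ≤ t) :
    A ≤ t • 1 := by
  rw [← Algebra.algebraMap_eq_smul_one]
  refine le_algebraMap_of_spectrum_le ?_
  rw [hA.spectrum_real_eq_range_eigenvalues]
  rintro _ ⟨i, rfl⟩
  exact h i

theorem trace_le_of_eigenvalues_le (σ : Equiv.Perm n) {f : n → ℝ}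
    (h : ∀ i, hA.eigenvalues (σ i) ≤ f i) : A.trace ≤ ∑ i, f i := by
  rw [hA.trace_eq_sum_eigenvalues, ← Equiv.sum_comp σ]
  exact Finset.sum_le_sum fun i _ => by simpa using h i

end IsHermitian

theorem IsHermitian.le_smul_one_of_antitone {p : ℕ} (hp : 0 < p) {A : Matrix (Fin p) (Fin p) ℝ}
    (hA : A.IsHermitian) {μ : Fin p → ℝ} (hμ : Antitone μ)
    (h : ∃ σ : Equiv.Perm (Fin p), ∀ i, μ i = hA.eigenvalues (σ i)) :
    A ≤ μ ⟨0, hp⟩ • 1 := by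
  obtain ⟨σ, hσ⟩ := h
  refine hA.le_smul_one_of_eigenvalues_le fun i => ?_
  rw [← σ.apply_symm_apply i, ← hσ]
  exact hμ (Nat.zero_le _)

theorem IsHermitian.eq_zero_of_rank_le {p : ℕ} {A : Matrix (Fin p) (Fin p) ℝ}
    (hA : A.IsHermitian) {μ : Fin p → ℝ} (hμ : Antitone μ) (hμ0 : ∀ i, 0 ≤ μ i)
    (h : ∃ σ : Equiv.Perm (Fin p), ∀ i, μ i = hA.eigenvalues (σ i)) {j : Fin p}
    (hj : A.rank ≤ j) : μ j = 0 := by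
  obtain ⟨σ, hσ⟩ := h
  by_contra hne
  have hpos : ∀ i ≤ j, hA.eigenvalues (σ i) ≠ 0 := fun i hi => by
    rw [← hσ i]
    exact ((lt_of_le_of_ne (hμ0 j) (Ne.symm hne)).trans_le (hμ hi)).ne'
  have hsub : (Finset.Iic j).map σ.toEmbedding ⊆
      Finset.univ.filter fun i => hA.eigenvalues i ≠ 0 := by
    intro i hi
    obtain ⟨i', hi', rfl⟩ := Finset.mem_map.mp hi
    simpa using hpos i' (Finset.mem_Iic.mp hi')
  have hcard := Finset.card_le_card hsub
  rw [Finset.card_map, Fin.card_Iic, ← Fintype.card_subtype, ← hA.rank_eq_card_non_zero_eigs]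
    at hcard
  omega

theorem posDef_one_add_mul_mul_transpose {m : Type*} [Fintype m] (K : Matrix n m ℝ)
    {A : Matrix m m ℝ} (hA : A.PosSemidef) : (1 + K * A * Kᵀ).PosDef :=
  PosDef.one.add_posSemidef <| by
    simpa [conjTranspose_eq_transpose_of_trivial] using hA.mul_mul_conjTranspose_same K

theorem inv_one_add_mul_inv_mul_transpose {m : Type*} [Fintype m] [DecidableEq m]
    (K : Matrix n m ℝ) {C : Matrix m m ℝ} (hC : C.PosDef) :
    (1 + K * C⁻¹ * Kᵀ)⁻¹ = 1 - K * (C + Kᵀ * K)⁻¹ * Kᵀ := by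
  have hCK : (C + Kᵀ * K).PosDef := by
    simpa [conjTranspose_eq_transpose_of_trivial] using
      hC.add_posSemidef (posSemidef_conjTranspose_mul_self K)
  have hCC : C⁻¹⁻¹ = C := nonsing_inv_nonsing_inv _ ((isUnit_iff_isUnit_det C).mp hC.isUnit)
  simpa [hCC] using add_mul_mul_inv_eq_sub 1 K C⁻¹ Kᵀ isUnit_one hC.inv.isUnit
    (by simpa [hCC] using hCK.isUnit)

end Matrix

section Recursion

variable {p : ℕ} {W : ℕ → Matrix (Fin p) (Fin p) ℝ}

theorem one_sub_Mrec_succ {k : ℕ} (hM : (1 - Mrec p W k).PosDef) :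
    1 - Mrec p W (k + 1) = (1 + W (k + 1) * (1 - Mrec p W k)⁻¹ * (W (k + 1))ᵀ)⁻¹ := by
  rw [inv_one_add_mul_inv_mul_transpose _ hM, Mrec, add_sub_right_comm]

theorem posDef_one_sub_Mrec : ∀ k, (1 - Mrec p W k).PosDef
  | 0 => by simpa [Mrec] using PosDef.one
  | k + 1 => by
    have hM := posDef_one_sub_Mrec k
    rw [one_sub_Mrec_succ hM]
    exact (posDef_one_add_mul_mul_transpose _ hM.inv.posSemidef).inv

theorem inv_one_sub_Mrec_succ (k : ℕ) :
    (1 - Mrec p W (k + 1))⁻¹ = 1 + W (k + 1) * (1 - Mrec p W k)⁻¹ * (W (k + 1))ᵀ := by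
  have hM := posDef_one_sub_Mrec (W := W) k
  rw [one_sub_Mrec_succ hM, nonsing_inv_nonsing_inv]
  exact (isUnit_iff_isUnit_det _).mp
    (posDef_one_add_mul_mul_transpose _ hM.inv.posSemidef).isUnit

theorem inv_one_sub_Mrec_succ_le {k : ℕ} {c : ℝ} (hc : (1 - Mrec p W k)⁻¹ ≤ c • 1) :
    (1 - Mrec p W (k + 1))⁻¹ ≤ 1 + c • (W (k + 1) * (W (k + 1))ᵀ) := by
  rw [inv_one_sub_Mrec_succ]
  have := star_left_conjugate_le_conjugate hc (W (k + 1))ᵀ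
  simpa [star_eq_conjTranspose, conjTranspose_eq_transpose_of_trivial] using this

theorem mrec_nonneg (hp : 0 < p) (dsv : ℕ → Fin p → ℝ) : ∀ k i, 0 ≤ mrec p hp dsv k i
  | 0, _ => le_rfl
  | k + 1, _ => mul_nonneg (sq_nonneg _) (by linarith [mrec_nonneg hp dsv k ⟨0, hp⟩])

theorem mrec_antitone (hp : 0 < p) {dsv : ℕ → Fin p → ℝ}
    (hdsv_nonneg : ∀ ℓ i, 0 ≤ dsv ℓ i) (hdsv_anti : ∀ ℓ, Antitone (dsv ℓ)) :
    ∀ k, Antitone (mrec p hp dsv k)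
  | 0 => fun _ _ _ => le_rfl
  | k + 1 => fun _ _ hij => mul_le_mul_of_nonneg_right
      (pow_le_pow_left₀ (hdsv_nonneg _ _) (hdsv_anti _ hij) 2)
      (by linarith [mrec_nonneg hp dsv k ⟨0, hp⟩])

theorem inv_one_sub_Mrec_le (hp : 0 < p) {dsv : ℕ → Fin p → ℝ}
    (hW : ∀ k, W (k + 1) * (W (k + 1))ᵀ ≤ dsv (k + 1) ⟨0, hp⟩ ^ 2 • 1) :
    ∀ k, (1 - Mrec p W k)⁻¹ ≤ (mrec p hp dsv k ⟨0, hp⟩ + 1) • 1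
  | 0 => by simp [Mrec, mrec]
  | k + 1 => by
    have hc : 0 ≤ mrec p hp dsv k ⟨0, hp⟩ + 1 := by
      linarith [mrec_nonneg hp dsv k ⟨0, hp⟩]
    calc (1 - Mrec p W (k + 1))⁻¹
        ≤ 1 + (mrec p hp dsv k ⟨0, hp⟩ + 1) • (W (k + 1) * (W (k + 1))ᵀ) :=
          inv_one_sub_Mrec_succ_le (inv_one_sub_Mrec_le hp hW k)
      _ ≤ 1 + (mrec p hp dsv k ⟨0, hp⟩ + 1) • (dsv (k + 1) ⟨0, hp⟩ ^ 2 • 1) := by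
          gcongr
          exact hW k
      _ = (mrec p hp dsv (k + 1) ⟨0, hp⟩ + 1) • 1 := by
          simp only [mrec, smul_smul, add_smul, one_smul, mul_comm, add_comm]

theorem mrec_succ_eq_zero_of_rank_le (hp : 0 < p) {dsv : ℕ → Fin p → ℝ} {k : ℕ}
    (hHerm : (W (k + 1) * (W (k + 1))ᵀ).IsHermitian) (hdsv_nonneg : ∀ i, 0 ≤ dsv (k + 1) i)
    (hdsv_anti : Antitone (dsv (k + 1)))
    (hdsv : ∃ σ : Equiv.Perm (Fin p), ∀ i, dsv (k + 1) i ^ 2 = hHerm.eigenvalues (σ i))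
    {j : Fin p} (hj : (W (k + 1)).rank ≤ j) : mrec p hp dsv (k + 1) j = 0 := by
  have := hHerm.eq_zero_of_rank_le (fun _ _ hab => pow_le_pow_left₀ (hdsv_nonneg _)
    (hdsv_anti hab) 2) (fun _ => sq_nonneg _) hdsv (by rwa [rank_self_mul_transpose])
  simp [mrec, pow_eq_zero_iff two_ne_zero |>.mp this]

theorem eigenvalues_inv_one_sub_Mrec_succ_le (hp : 0 < p) {dsv : ℕ → Fin p → ℝ}
    (hdsv_nonneg : ∀ ℓ i, 0 ≤ dsv ℓ i) (hdsv_anti : ∀ ℓ, Antitone (dsv ℓ))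
    (hHerm : ∀ ℓ, (W ℓ * (W ℓ)ᵀ).IsHermitian)
    (hdsv : ∀ ℓ, ∃ σ : Equiv.Perm (Fin p), ∀ i,
      dsv ℓ i ^ 2 = (hHerm ℓ).eigenvalues (σ i))
    {k : ℕ} (hA : ((1 - Mrec p W (k + 1))⁻¹).IsHermitian) {lam : Fin p → ℝ}
    (hlam_anti : Antitone lam)
    (hlam : ∃ σ : Equiv.Perm (Fin p), ∀ i, lam i = hA.eigenvalues (σ i))
    (i : Fin p) : lam i ≤ mrec p hp dsv (k + 1) i + 1 := by
  have hsq : ∀ ℓ, Antitone fun i => dsv ℓ i ^ 2 := fun ℓ _ _ hij =>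
    pow_le_pow_left₀ (hdsv_nonneg _ _) (hdsv_anti ℓ hij) 2
  have hAB : (1 - Mrec p W (k + 1))⁻¹ ≤
      1 + (mrec p hp dsv k ⟨0, hp⟩ + 1) • (W (k + 1) * (W (k + 1))ᵀ) :=
    inv_one_sub_Mrec_succ_le <| inv_one_sub_Mrec_le hp
      (fun ℓ => (hHerm (ℓ + 1)).le_smul_one_of_antitone hp (hsq (ℓ + 1)) (hdsv (ℓ + 1))) k
  obtain ⟨σ, hσ⟩ := hlam
  obtain ⟨τ, hτ⟩ := hdsv (k + 1)
  refine LinearMap.eigenvalue_le_of_le (toEuclideanLin_le_toEuclideanLin hAB)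
    (hA.eigenvectorBasis.reindex σ.symm) ((hHerm (k + 1)).eigenvectorBasis.reindex τ.symm)
    hlam_anti ((mrec_antitone hp hdsv_nonneg hdsv_anti (k + 1)).add_const 1)
    (fun j => ?_) (fun j => ?_) i
  · simp [hσ, hA.toEuclideanLin_eigenvectorBasis]
  · rw [OrthonormalBasis.reindex_apply, Equiv.symm_symm,
      (hHerm (k + 1)).toEuclideanLin_one_add_smul_eigenvectorBasis, ← hτ, mrec, mul_comm,
      add_comm]

end Recursion

/-- For every `d ≥ 1` and `i ≤ r`, the `i`-th largest eigenvalue of `(I_p - M_d)⁻¹` is at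
most `m_{d,i} + 1`; consequently `Tr((I_p - M_d)⁻¹) ≤ p + ∑_{i=1}^r m_{d,i}`. -/
theorem eigenvalue_bound_Mrec
    (p : ℕ) (hp : 0 < p) (d r : ℕ) (hd : 1 ≤ d)
    (W : ℕ → Matrix (Fin p) (Fin p) ℝ)
    (hrank : ∀ ℓ, 1 ≤ ℓ → ℓ ≤ d → (W ℓ).rank = r)
    -- the singular values of each `W_ℓ`, in decreasing order
    (dsv : ℕ → Fin p → ℝ)
    (hdsv_nonneg : ∀ ℓ i, 0 ≤ dsv ℓ i) (hdsv_anti : ∀ ℓ, Antitone (dsv ℓ))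
    (hHerm : ∀ ℓ, (W ℓ * (W ℓ)ᵀ).IsHermitian)
    (hdsv : ∀ ℓ, ∃ σ : Equiv.Perm (Fin p), ∀ i, dsv ℓ i ^ 2 = (hHerm ℓ).eigenvalues (σ i))
    -- the eigenvalues of `(I - M_d)⁻¹`, in decreasing order
    (hA : ((1 - Mrec p W d)⁻¹).IsHermitian)
    (lam : Fin p → ℝ) (hlam_anti : Antitone lam)
    (hlam : ∃ σ : Equiv.Perm (Fin p), ∀ i, lam i = hA.eigenvalues (σ i)) :
    (∀ i : Fin p, (i : ℕ) < r → lam i ≤ mrec p hp dsv d i + 1) ∧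
      Matrix.trace (1 - Mrec p W d)⁻¹ ≤
        (p : ℝ) + ∑ i ∈ Finset.univ.filter (fun i : Fin p => (i : ℕ) < r),
          mrec p hp dsv d i := by
  obtain ⟨k, rfl⟩ : ∃ k, d = k + 1 := ⟨d - 1, by omega⟩
  have hbound := eigenvalues_inv_one_sub_Mrec_succ_le hp hdsv_nonneg hdsv_anti hHerm hdsv hA
    hlam_anti hlam
  have hzero : ∀ j : Fin p, ¬(j : ℕ) < r → mrec p hp dsv (k + 1) j = 0 := fun j hj =>
    mrec_succ_eq_zero_of_rank_le hp (hHerm (k + 1)) (hdsv_nonneg _) (hdsv_anti _) (hdsv _)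
      (by rw [hrank (k + 1) hd le_rfl]; omega)
  obtain ⟨σ, hσ⟩ := hlam
  refine ⟨fun i _ => hbound i, ?_⟩
  calc Matrix.trace (1 - Mrec p W (k + 1))⁻¹
      ≤ ∑ i, (mrec p hp dsv (k + 1) i + 1) :=
        hA.trace_le_of_eigenvalues_le σ fun i => hσ i ▸ hbound i
    _ = p + ∑ i ∈ Finset.univ.filter (fun i : Fin p => (i : ℕ) < r),
          mrec p hp dsv (k + 1) i := by
        rw [Finset.sum_add_distrib,
          Finset.sum_filter_of_ne fun j _ h => not_not.mp (mt (hzero j) h)]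
        simp [add_comm]
end
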